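/- Let ψ = c₀|0⟩ + c₁|1⟩ ∈ ℂ² be arbitrary. For each pair of measurement outcomes (s, t) ∈ {0,1}², define the (unnormalized) branch vector v_{s,t}(ψ) = (I ⊗ ⟨x_t|) (I ⊗ SH) (S^s ⊗ X^s) ((I₄ + (−1)^s Z⊗Z)/2) (ψ ⊗ |T⟩) ∈ ℂ², where |x₀⟩ = |+⟩ and |x₁⟩ = |−⟩. Then for every (s, t) there exists a nonzero complex scalar λ_{s,t}, independent of ψ, such that Z^t v_{s,t}(ψ) = λ_{s,t} · T† ψ. In other words, the measurement sequence: Z⊗Z measurement on ψ⊗|T⟩, conditional Clifford S⊗X on outcome −1, basis change SH on the ancilla, X-basis measurement of the ancilla, and conditional Z correction on outcome −, implements the T† gate on ψ in every measurement branch. -/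

import Mathlib

open Matrix Kronecker

noncomputable section

/-- The computational basis state `|a⟩` of a qubit `ℂ²`. -/
def ket (a : Fin 2) : Fin 2 → ℂ := fun b => if b = a then 1 else 0

/-- Tensor (Kronecker) product of two single-qubit state vectors. -/
def tensorVec (ψ φ : Fin 2 → ℂ) : Fin 2 × Fin 2 → ℂ := fun p => ψ p.1 * φ p.2

/-- The Pauli `X` gate. -/
def gateX : Matrix (Fin 2) (Fin 2) ℂ := !![0, 1; 1, 0]

/-- The Pauli `Z` gate. -/
def gateZ : Matrix (Fin 2) (Fin 2) ℂ := !![1, 0; 0, -1]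

/-- The phase gate `S = diag(1, i)`. -/
def gateS : Matrix (Fin 2) (Fin 2) ℂ := !![1, 0; 0, Complex.I]

/-- The Hadamard gate `H`. -/
def gateH : Matrix (Fin 2) (Fin 2) ℂ := (Real.sqrt 2 : ℂ)⁻¹ • !![1, 1; 1, -1]

/-- The gate `T† = diag(1, e^{−iπ/4})`. -/
def gateTdag : Matrix (Fin 2) (Fin 2) ℂ :=
  !![1, 0; 0, Complex.exp (-(Real.pi * Complex.I / 4))]

/-- The magic state `|T⟩ = (|0⟩ + e^{iπ/4}|1⟩)/√2`. -/
def ketT : Fin 2 → ℂ :=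
  fun b => if b = 0 then (Real.sqrt 2 : ℂ)⁻¹
           else Complex.exp (Real.pi * Complex.I / 4) * (Real.sqrt 2 : ℂ)⁻¹

/-- The X-basis states `|x₀⟩ = |+⟩` and `|x₁⟩ = |−⟩`. -/
def xket (t : Fin 2) : Fin 2 → ℂ :=
  fun b => (Real.sqrt 2 : ℂ)⁻¹ * (-1 : ℂ) ^ ((t : ℕ) * (b : ℕ))

/-- The projector `P_s = (I₄ + (−1)^s Z⊗Z)/2` onto the `(−1)^s`-eigenspace of `Z ⊗ Z`. -/
def projZZ (s : Fin 2) : Matrix (Fin 2 × Fin 2) (Fin 2 × Fin 2) ℂ :=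
  (2 : ℂ)⁻¹ • (1 + ((-1 : ℂ) ^ (s : ℕ)) • (gateZ ⊗ₖ gateZ))

/-- Applying the bra `⟨φ|` to the second tensor factor of a two-qubit state:
`(I ⊗ ⟨φ|) v`. -/
def braSecond (φ : Fin 2 → ℂ) (v : Fin 2 × Fin 2 → ℂ) : Fin 2 → ℂ :=
  fun a => ∑ b : Fin 2, (starRingEnd ℂ) (φ b) * v (a, b)

/-- The (unnormalized) branch vector
`v_{s,t}(ψ) = (I ⊗ ⟨x_t|) (I ⊗ SH) (S^s ⊗ X^s) ((I₄ + (−1)^s Z⊗Z)/2) (ψ ⊗ |T⟩)`. -/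
def branchVec (s t : Fin 2) (ψ : Fin 2 → ℂ) : Fin 2 → ℂ :=
  braSecond (xket t)
    (((1 : Matrix (Fin 2) (Fin 2) ℂ) ⊗ₖ (gateS * gateH)).mulVec
      (((gateS ^ (s : ℕ)) ⊗ₖ (gateX ^ (s : ℕ))).mulVec
        ((projZZ s).mulVec (tensorVec ψ ketT))))

/-! After the `Z ⊗ Z` projection only the terms `c_a T_{a+s} |a⟩|a+s⟩` survive. The correction
`X^s` returns the ancilla to `|a⟩` and `S^s` contributes `i^{sa}`, so projecting the ancilla onto
`(SH)†|x_t⟩` leaves the diagonal vector `c_a T_{a+s} i^{sa} ⟨x_t|SH|a⟩`. Its two diagonal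
entries differ by `e^{-iπ/4}` in every branch: the ancilla amplitudes `(1 ± i)/2` have ratio `∓i`,
which `Z^t` turns into `-i` for both `t`, and `T_{1+s} i^s / T_s = e^{iπ/4}` for both `s`. -/

open Complex

theorem kroneckerMap_mulVec_tensorVec (A B : Matrix (Fin 2) (Fin 2) ℂ) (ψ φ : Fin 2 → ℂ) :
    (A ⊗ₖ B) *ᵥ tensorVec ψ φ = tensorVec (A *ᵥ ψ) (B *ᵥ φ) := by
  ext ⟨a, b⟩
  simp only [mulVec, dotProduct, tensorVec, kroneckerMap_apply, Fintype.sum_prod_type,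
    Finset.sum_mul_sum]
  exact Finset.sum_congr rfl fun _ _ => Finset.sum_congr rfl fun _ _ => by ring

theorem braSecond_tensorVec (χ ψ φ : Fin 2 → ℂ) :
    braSecond χ (tensorVec ψ φ) = (star χ ⬝ᵥ φ) • ψ := by
  ext a
  simp only [braSecond, tensorVec, dotProduct, Pi.smul_apply, smul_eq_mul, Finset.sum_mul,
    Pi.star_apply, starRingEnd_apply]
  exact Finset.sum_congr rfl fun _ _ => by ring

theorem braSecond_sum {ι : Type*} (χ : Fin 2 → ℂ) (s : Finset ι) (v : ι → Fin 2 × Fin 2 → ℂ) :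
    braSecond χ (∑ i ∈ s, v i) = ∑ i ∈ s, braSecond χ (v i) := by
  ext a
  simp only [braSecond, Finset.sum_apply, Finset.mul_sum]
  exact Finset.sum_comm

theorem braSecond_smul (χ : Fin 2 → ℂ) (c : ℂ) (v : Fin 2 × Fin 2 → ℂ) :
    braSecond χ (c • v) = c • braSecond χ v := by
  ext a
  simp only [braSecond, Pi.smul_apply, smul_eq_mul, Finset.mul_sum]
  exact Finset.sum_congr rfl fun _ _ => by ring

theorem sum_smul_ket (ψ : Fin 2 → ℂ) : ∑ a, ψ a • ket a = ψ := by
  ext b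
  simp [ket]

theorem projZZ_mulVec_tensorVec (s : Fin 2) (ψ φ : Fin 2 → ℂ) :
    projZZ s *ᵥ tensorVec ψ φ = ∑ a, (ψ a * φ (a + s)) • tensorVec (ket a) (ket (a + s)) := by
  ext ⟨a, b⟩
  fin_cases s <;> fin_cases a <;> fin_cases b <;>
    simp [projZZ, gateZ, tensorVec, ket, mulVec, dotProduct, Fintype.sum_prod_type,
      Matrix.one_apply, one_add_one_eq_two]

theorem gateX_pow_mulVec_ket (s a : Fin 2) : gateX ^ (s : ℕ) *ᵥ ket (a + s) = ket a := by
  ext b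
  fin_cases s <;> fin_cases a <;> fin_cases b <;> simp [gateX, ket, mulVec, dotProduct]

theorem gateS_pow_mulVec_ket (s a : Fin 2) :
    gateS ^ (s : ℕ) *ᵥ ket a = I ^ ((s : ℕ) * a) • ket a := by
  ext b
  fin_cases s <;> fin_cases a <;> fin_cases b <;> simp [gateS, ket, mulVec, dotProduct]

theorem gateZ_pow_mulVec (t : Fin 2) (ψ : Fin 2 → ℂ) :
    gateZ ^ (t : ℕ) *ᵥ ψ = fun a : Fin 2 => (-1) ^ ((t : ℕ) * a) * ψ a := by
  ext a
  fin_cases t <;> fin_cases a <;> simp [gateZ, mulVec, dotProduct]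

theorem gateTdag_mulVec (ψ : Fin 2 → ℂ) :
    gateTdag *ᵥ ψ = fun a : Fin 2 => exp (-(Real.pi * I / 4)) ^ (a : ℕ) * ψ a := by
  ext a
  fin_cases a <;> simp [gateTdag, mulVec, dotProduct]

def ancillaAmp (t a : Fin 2) : ℂ := star (xket t) ⬝ᵥ (gateS * gateH) *ᵥ ket a

theorem branchVec_eq (s t : Fin 2) (ψ : Fin 2 → ℂ) :
    branchVec s t ψ = fun a : Fin 2 => ψ a * ketT (a + s) * I ^ ((s : ℕ) * a) * ancillaAmp t a := by
  simp only [branchVec, projZZ_mulVec_tensorVec, mulVec_sum, mulVec_smul,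
    kroneckerMap_mulVec_tensorVec, gateX_pow_mulVec_ket, gateS_pow_mulVec_ket, one_mulVec,
    braSecond_sum, braSecond_smul, braSecond_tensorVec, ancillaAmp, smul_smul]
  rw [← sum_smul_ket (fun a => _)]
  exact Finset.sum_congr rfl fun a _ => congrArg (· • ket a) (by ring)

theorem ancillaAmp_eq (t a : Fin 2) : ancillaAmp t a = (1 + (-1) ^ ((t : ℕ) + a) * I) / 2 := by
  have h : ((√2 : ℝ) : ℂ)⁻¹ * ((√2 : ℝ) : ℂ)⁻¹ = 1 / 2 := by
    rw [← mul_inv, ← ofReal_mul, Real.mul_self_sqrt zero_le_two]; norm_num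
  rw [div_eq_mul_one_div _ (2 : ℂ), ← h]
  fin_cases t <;> fin_cases a <;>
    simp [ancillaAmp, xket, gateS, gateH, ket, mulVec, dotProduct, Fin.sum_univ_two, add_mul,
      mul_comm, mul_left_comm]

theorem ancillaAmp_zero_ne_zero (t : Fin 2) : ancillaAmp t 0 ≠ 0 := by
  rw [ancillaAmp_eq]
  fin_cases t <;> simp [Complex.ext_iff]

theorem neg_one_pow_mul_ancillaAmp_one (t : Fin 2) :
    (-1) ^ (t : ℕ) * ancillaAmp t 1 = -I * ancillaAmp t 0 := by
  have hsq : ((-1 : ℂ) ^ (t : ℕ)) ^ 2 = 1 := by rw [← pow_mul, pow_mul', neg_one_sq, one_pow]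
  rw [ancillaAmp_eq, ancillaAmp_eq, Fin.val_one, Fin.val_zero, pow_succ, add_zero]
  linear_combination (-I / 2) * hsq + ((-1) ^ (t : ℕ) / 2) * I_sq

theorem exp_pi_mul_I_div_four_mul_self :
    exp (Real.pi * I / 4) * exp (Real.pi * I / 4) = I := by
  rw [← exp_add, show Real.pi * I / 4 + Real.pi * I / 4 = (Real.pi / 2 : ℝ) * I by push_cast; ring,
    exp_mul_I, ← ofReal_cos, ← ofReal_sin, Real.cos_pi_div_two, Real.sin_pi_div_two]
  simp

theorem exp_neg_pi_mul_I_div_four :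
    exp (-(Real.pi * I / 4)) = -I * exp (Real.pi * I / 4) := by
  rw [Complex.exp_neg, inv_eq_of_mul_eq_one_right]
  linear_combination (-I) * exp_pi_mul_I_div_four_mul_self - I_sq

theorem ketT_ne_zero (b : Fin 2) : ketT b ≠ 0 := by
  fin_cases b <;> simp [ketT, exp_ne_zero]

theorem ketT_one_add_mul_I_pow_mul_neg_I (s : Fin 2) :
    ketT (1 + s) * I ^ (s : ℕ) * -I = ketT s * exp (-(Real.pi * I / 4)) := by
  rw [exp_neg_pi_mul_I_div_four]
  fin_cases s
  · simp only [ketT, Fin.zero_eta, add_zero, one_ne_zero, ↓reduceIte, pow_zero, mul_one]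
    ring
  · simp only [ketT, Fin.mk_one, Fin.reduceAdd, one_ne_zero, ↓reduceIte, pow_one]
    linear_combination I * ((√2 : ℝ) : ℂ)⁻¹ * exp_pi_mul_I_div_four_mul_self

/-- Let `ψ = c₀|0⟩ + c₁|1⟩ ∈ ℂ²` be arbitrary.  For each pair of measurement outcomes
`(s, t) ∈ {0,1}²`, consider the (unnormalized) branch vector
`v_{s,t}(ψ) = (I ⊗ ⟨x_t|) (I ⊗ SH) (S^s ⊗ X^s) ((I₄ + (−1)^s Z⊗Z)/2) (ψ ⊗ |T⟩) ∈ ℂ²`,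
where `|x₀⟩ = |+⟩` and `|x₁⟩ = |−⟩`.  Then for every `(s, t)` there exists a nonzero
complex scalar `λ_{s,t}`, independent of `ψ`, such that
`Z^t v_{s,t}(ψ) = λ_{s,t} · T† ψ`.  In other words, the measurement sequence
(Z⊗Z measurement on `ψ⊗|T⟩`, conditional Clifford `S⊗X` on outcome `−1`, basis change
`SH` on the ancilla, X-basis measurement of the ancilla, and conditional `Z` correction on
outcome `−`) implements the `T†` gate on `ψ` in every measurement branch. -/
theorem measurement_based_Tdagger_gate :
    ∀ s t : Fin 2, ∃ lam : ℂ, lam ≠ 0 ∧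
      ∀ c₀ c₁ : ℂ,
        (gateZ ^ (t : ℕ)).mulVec (branchVec s t ![c₀, c₁])
          = lam • gateTdag.mulVec ![c₀, c₁] := by
  intro s t
  refine ⟨ketT s * ancillaAmp t 0, mul_ne_zero (ketT_ne_zero s) (ancillaAmp_zero_ne_zero t),
    fun c₀ c₁ => ?_⟩
  rw [branchVec_eq, gateZ_pow_mulVec, gateTdag_mulVec]
  ext a
  fin_cases a
  · simp only [Fin.zero_eta, Fin.val_zero, mul_zero, pow_zero, zero_add, cons_val_zero,
      Pi.smul_apply, smul_eq_mul]
    ring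
  · simp only [Fin.mk_one, Fin.val_one, mul_one, pow_one, cons_val_one, cons_val_fin_one,
      Pi.smul_apply, smul_eq_mul]
    linear_combination c₁ * ketT (1 + s) * I ^ (s : ℕ) * neg_one_pow_mul_ancillaAmp_one t +
      c₁ * ancillaAmp t 0 * ketT_one_add_mul_I_pow_mul_neg_I s
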